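/- arXiv:1505.03923 — 2 statements merged into one kernel-verified Lean document; each statement's English description precedes it below -/
import Mathlib

section
/- Let (X, μ) be a measure space, V : X → [0,∞) measurable, and W : [0,∞) → [0,∞) monotone nondecreasing and right-continuous with W(0) = 0. Let W⁻¹(t) = inf{s ≥ 0 : W(s) ≥ t}. Then for every λ ≥ 0, ∫_X W((λ - V(x))⁺) dμ(x) = ∫₀^{W(λ)} μ({x : V(x) ≤ λ - W⁻¹(t)}) dt, where (a)⁺ = max(a,0). -/
/-!
By the layer cake formula, `∫ W((λ - V)⁺) dμ = ∫₀^∞ μ {W((λ - V)⁺) ≥ t} dt`, and since `V ≥ 0`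
the integrand vanishes for `t > W(λ)`. For `0 < t ≤ W(λ)`, right continuity makes the infimum
`W⁻¹(t)` attained, so `t ≤ W(u) ↔ W⁻¹(t) ≤ u` for `u ≥ 0`; as `W(0) = 0` this forces
`W⁻¹(t) > 0`, and the superlevel set becomes `{V ≤ λ - W⁻¹(t)}`.
-/

open MeasureTheory Set

theorem MeasureTheory.lintegral_eq_lintegral_Ioc_meas_le {α : Type*} [MeasurableSpace α]
    (μ : Measure α) {f : α → ℝ} {M : ℝ} (f_nn : 0 ≤ᵐ[μ] f) (f_mble : AEMeasurable f μ)
    (f_bdd : f ≤ᵐ[μ] fun _ ↦ M) :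
    ∫⁻ ω, ENNReal.ofReal (f ω) ∂μ = ∫⁻ t in Ioc 0 M, μ {a | t ≤ f a} := by
  rcases lt_or_ge M 0 with hM | hM
  · have : ∀ᵐ _ ∂μ, False := by
      filter_upwards [f_nn, f_bdd] with a h0 h1 using (h0.trans h1).not_gt hM
    simp [ae_eq_bot.mp (Filter.eventually_false_iff_eq_bot.mp this)]
  have htail : ∫⁻ t in Ioi M, μ {a | t ≤ f a} = 0 := by
    refine setLIntegral_eq_zero measurableSet_Ioi fun t (ht : M < t) ↦ ?_
    rw [Pi.zero_apply, measure_eq_zero_iff_ae_notMem]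
    filter_upwards [f_bdd] with a ha using not_le.mpr (ha.trans_lt ht)
  rw [lintegral_eq_lintegral_meas_le μ f_nn f_mble, ← Ioc_union_Ioi_eq_Ioi hM,
    lintegral_union measurableSet_Ioi Ioc_disjoint_Ioi_same, htail, add_zero]

/-- The generalized inverse `W⁻¹`. Since `sInf ∅ = 0` in `ℝ`, the lemmas below assume that
`W` reaches the level `t` on `[0, ∞)`. -/
noncomputable def genInv (W : ℝ → ℝ) (t : ℝ) : ℝ := sInf {s : ℝ | 0 ≤ s ∧ t ≤ W s}

section GenInv

variable {W : ℝ → ℝ} {t : ℝ}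

theorem le_apply_genInv (hW : Monotone W) (hWrc : ∀ s, ContinuousWithinAt W (Ici s) s)
    (hne : ∃ s, 0 ≤ s ∧ t ≤ W s) : t ≤ W (genInv W t) := by
  have hbdd : BddBelow {s : ℝ | 0 ≤ s ∧ t ≤ W s} := ⟨0, fun s hs ↦ hs.1⟩
  have hright : ∀ s ∈ Ioi (genInv W t), t ≤ W s := fun s hs ↦ by
    obtain ⟨u, hu, hus⟩ := (csInf_lt_iff hbdd hne).mp hs
    exact hu.2.trans (hW hus.le)
  exact ge_of_tendsto ((hWrc _).mono_left (nhdsWithin_mono _ Ioi_subset_Ici_self))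
    (eventually_nhdsWithin_of_forall hright)

theorem genInv_le_iff (hW : Monotone W) (hWrc : ∀ s, ContinuousWithinAt W (Ici s) s)
    (hne : ∃ s, 0 ≤ s ∧ t ≤ W s) {u : ℝ} (hu : 0 ≤ u) : genInv W t ≤ u ↔ t ≤ W u :=
  ⟨fun h ↦ (le_apply_genInv hW hWrc hne).trans (hW h),
    fun h ↦ csInf_le ⟨0, fun _ hs ↦ hs.1⟩ ⟨hu, h⟩⟩

theorem genInv_pos (hW : Monotone W) (hWrc : ∀ s, ContinuousWithinAt W (Ici s) s)
    (hne : ∃ s, 0 ≤ s ∧ t ≤ W s) (hW0 : W 0 = 0) (ht : 0 < t) : 0 < genInv W t := by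
  by_contra! h
  linarith [(genInv_le_iff hW hWrc hne le_rfl).mp h]

theorem le_apply_max_zero_iff (hW : Monotone W) (hWrc : ∀ s, ContinuousWithinAt W (Ici s) s)
    (hne : ∃ s, 0 ≤ s ∧ t ≤ W s) (hW0 : W 0 = 0) (ht : 0 < t) (a : ℝ) :
    t ≤ W (max a 0) ↔ genInv W t ≤ a := by
  rw [← genInv_le_iff hW hWrc hne (le_max_right a 0), le_max_iff,
    or_iff_left (genInv_pos hW hWrc hne hW0 ht).not_ge]

end GenInv

theorem stmt_3_general {X : Type*} [MeasurableSpace X] (μ : Measure X)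
    (V : X → ℝ) (hV0 : ∀ x, 0 ≤ V x) (hV : Measurable V)
    (W : ℝ → ℝ) (hWmono : Monotone W)
    (hWrc : ∀ s : ℝ, ContinuousWithinAt W (Set.Ici s) s)
    (hW0 : ∀ s ≤ (0:ℝ), W s = 0) :
    ∀ lam ≥ (0:ℝ),
      ∫⁻ x, ENNReal.ofReal (W (max (lam - V x) 0)) ∂μ
        = ∫⁻ t in Set.Ioc (0:ℝ) (W lam),
            μ {x | V x ≤ lam - sInf {s : ℝ | 0 ≤ s ∧ t ≤ W s}} := by
  intro lam hlam
  have hW00 : W 0 = 0 := hW0 0 le_rfl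
  have hmeas : Measurable fun x ↦ W (max (lam - V x) 0) :=
    hWmono.measurable.comp ((measurable_const.sub hV).max measurable_const)
  have hbdd : ∀ x, W (max (lam - V x) 0) ≤ W lam := fun x ↦
    hWmono (max_le (by linarith [hV0 x]) hlam)
  rw [lintegral_eq_lintegral_Ioc_meas_le μ
    (ae_of_all _ fun _ ↦ hW00.ge.trans (hWmono (le_max_right _ _))) hmeas.aemeasurable
    (ae_of_all _ hbdd)]
  refine setLIntegral_congr_fun measurableSet_Ioc fun t ht ↦ ?_
  simp_rw [le_apply_max_zero_iff hWmono hWrc ⟨lam, hlam, ht.2⟩ hW00 ht.1, genInv, le_sub_comm]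

theorem stmt_3 {X : Type*} [MeasurableSpace X] (μ : Measure X)
    (V : X → ℝ) (hV0 : ∀ x, 0 ≤ V x) (hV : Measurable V)
    (W : ℝ → ℝ) (hWmono : Monotone W) (hWnonneg : ∀ s, 0 ≤ W s)
    (hWrc : ∀ s : ℝ, ContinuousWithinAt W (Set.Ici s) s)
    (hW0 : ∀ s ≤ (0:ℝ), W s = 0) :
    ∀ lam ≥ (0:ℝ),
      ∫⁻ x, ENNReal.ofReal (W (max (lam - V x) 0)) ∂μ
        = ∫⁻ t in Set.Ioc (0:ℝ) (W lam),
            μ {x | V x ≤ lam - sInf {s : ℝ | 0 ≤ s ∧ t ≤ W s}} :=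
  stmt_3_general μ V hV0 hV W hWmono hWrc hW0
end

section
/- Let F∧, F∨ : [0,∞) → [0,∞) be nondecreasing with F∧ ≤ F∨, F∧ not identically 0, and suppose there exist C > 0 and λ₀ > 0 such that F∨(λ) ≤ C·F∧(λ/2) for all λ ≥ λ₀. Define ℱ^b(t) = ∫₀^∞ F^b(λ)·t·e^{-tλ} dλ for b ∈ {∧,∨}. Then limsup_{t→0⁺} ℱ∨(t)/ℱ∧(t) ≤ C, provided that ℱ∧(2t) → ∞ as t → 0⁺. -/
/-!
Split `ℱ∨(t)` at `λ₀`. The part over `(0, λ₀]` is at most `F∨(λ₀) λ₀ t`; on `[λ₀, ∞)` the domination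
`F∨(λ) ≤ C F∧(λ/2)` and the substitution `λ = 2μ` bound the rest by `C ℱ∧(2t)`. The same substitution
and monotonicity of `F∧` give `ℱ∧(2t) ≤ ℱ∧(t)`, hence
`ℱ∨(t) / ℱ∧(t) ≤ F∨(λ₀) λ₀ t / ℱ∧(2t) + C`, and the first term tends to `0` since `ℱ∧(2t) → ∞`.
-/

open MeasureTheory Set Filter Topology
open scoped ENNReal

theorem lintegral_comp_mul_left_Ioi (g : ℝ → ℝ≥0∞) (a : ℝ) {c : ℝ} (hc : 0 < c) :
    ENNReal.ofReal c * ∫⁻ x in Ioi a, g (c * x) = ∫⁻ x in Ioi (c * a), g x := by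
  have hemb : MeasurableEmbedding (c * ·) :=
    (Homeomorph.mulLeft₀ c hc.ne').toMeasurableEquiv.measurableEmbedding
  have hmap := congrArg (fun μ => ENNReal.ofReal c • (μ.restrict (Ioi (c * a))))
    (Real.map_volume_mul_left hc.ne')
  simp only [hemb.restrict_map, preimage_const_mul_Ioi₀ _ hc, mul_div_cancel_left₀ _ hc.ne',
    Measure.restrict_smul, smul_smul, abs_inv, abs_of_pos hc] at hmap
  rw [← ENNReal.ofReal_mul hc.le, mul_inv_cancel₀ hc.ne', ENNReal.ofReal_one, one_smul] at hmap
  rw [← hmap, lintegral_smul_measure, hemb.lintegral_map]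
  rfl

/-- The paper's `ℱ(t) = ∫₀^∞ F(λ) t e^{-tλ} dλ`; `ENNReal.ofReal` truncates negative integrands. -/
noncomputable def abelMean (F : ℝ → ℝ) (t : ℝ) : ℝ≥0∞ :=
  ∫⁻ s in Ioi 0, ENNReal.ofReal (F s * t * Real.exp (-t * s))

theorem abelMean_two_mul (F : ℝ → ℝ) (t : ℝ) :
    abelMean F (2 * t) = abelMean (fun s => F (s / 2)) t := by
  have h := lintegral_comp_mul_left_Ioi
    (fun s => ENNReal.ofReal (F (s / 2) * t * Real.exp (-t * s))) 0 two_pos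
  rw [mul_zero] at h
  rw [abelMean, abelMean, ← h, ← lintegral_const_mul' _ _ ENNReal.ofReal_ne_top]
  refine lintegral_congr fun s => ?_
  rw [← ENNReal.ofReal_mul zero_le_two, mul_div_cancel_left₀ _ two_ne_zero]
  ring_nf

theorem abelMean_mono {F G : ℝ → ℝ} {t : ℝ} (ht : 0 ≤ t) (hFG : ∀ s > 0, F s ≤ G s) :
    abelMean F t ≤ abelMean G t :=
  setLIntegral_mono' measurableSet_Ioi fun s hs => ENNReal.ofReal_le_ofReal <| by
    gcongr
    exact hFG s hs

theorem abelMean_const_mul (F : ℝ → ℝ) {c : ℝ} (hc : 0 ≤ c) (t : ℝ) :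
    abelMean (fun s => c * F s) t = ENNReal.ofReal c * abelMean F t := by
  rw [abelMean, abelMean, ← lintegral_const_mul' _ _ ENNReal.ofReal_ne_top]
  refine lintegral_congr fun s => ?_
  rw [← ENNReal.ofReal_mul hc]
  ring_nf

theorem abelMean_two_mul_le {F : ℝ → ℝ} (hF : MonotoneOn F (Ici 0)) {t : ℝ} (ht : 0 ≤ t) :
    abelMean F (2 * t) ≤ abelMean F t := by
  rw [abelMean_two_mul]
  exact abelMean_mono ht fun s hs => hF (by simp only [mem_Ici]; linarith) hs.le (by linarith)

theorem abelMean_le_add_abelMean_of_le_on_Ici {F G : ℝ → ℝ} (hF : MonotoneOn F (Ici 0)) {s₀ : ℝ}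
    (hs₀ : 0 ≤ s₀) (hFG : ∀ s ≥ s₀, F s ≤ G s) {t : ℝ} (ht : 0 ≤ t) :
    abelMean F t ≤ ENNReal.ofReal (F s₀ * t) * ENNReal.ofReal s₀ + abelMean G t := by
  have head : ∫⁻ s in Ioc 0 s₀, ENNReal.ofReal (F s * t * Real.exp (-t * s))
      ≤ ENNReal.ofReal (F s₀ * t) * ENNReal.ofReal s₀ := by
    calc _ ≤ ∫⁻ _ in Ioc 0 s₀, ENNReal.ofReal (F s₀ * t) := by
          refine setLIntegral_mono' measurableSet_Ioc fun s hs => ?_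
          have hexp : Real.exp (-t * s) ≤ 1 := Real.exp_le_one_iff.2 (by nlinarith [hs.1])
          rw [ENNReal.ofReal_mul' (Real.exp_nonneg _)]
          calc _ ≤ ENNReal.ofReal (F s * t) * 1 := by gcongr; exact ENNReal.ofReal_le_one.2 hexp
            _ ≤ _ := by
              rw [mul_one]
              gcongr
              exact hF hs.1.le hs₀ hs.2
      _ = _ := by rw [setLIntegral_const, Real.volume_Ioc, sub_zero]
  have tail : ∫⁻ s in Ioi s₀, ENNReal.ofReal (F s * t * Real.exp (-t * s)) ≤ abelMean G t :=
    calc _ ≤ ∫⁻ s in Ioi s₀, ENNReal.ofReal (G s * t * Real.exp (-t * s)) :=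
          setLIntegral_mono' measurableSet_Ioi fun s hs =>
            ENNReal.ofReal_le_ofReal (by gcongr; exact hFG s hs.le)
      _ ≤ _ := lintegral_mono_set (Ioi_subset_Ioi hs₀)
  calc abelMean F t
      = ∫⁻ s in Ioc 0 s₀ ∪ Ioi s₀, ENNReal.ofReal (F s * t * Real.exp (-t * s)) := by
        rw [Ioc_union_Ioi_eq_Ioi hs₀, abelMean]
    _ ≤ _ := (lintegral_union_le _ _ _).trans (add_le_add head tail)

theorem ENNReal.add_mul_div_le {a c x y : ℝ≥0∞} (hyx : y ≤ x) : (a + c * y) / x ≤ a / y + c := by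
  rw [ENNReal.add_div, mul_div_assoc]
  gcongr
  exact mul_le_of_le_one_right' (ENNReal.div_le_of_le_mul (by rwa [one_mul]))

theorem stmt_6_general (Fwedge Fvee : ℝ → ℝ)
    (hw : MonotoneOn Fwedge (Set.Ici 0)) (hv : MonotoneOn Fvee (Set.Ici 0))
    (C lam₀ : ℝ) (hC : 0 < C) (hlam₀ : 0 < lam₀)
    (hdom : ∀ lam ≥ lam₀, Fvee lam ≤ C * Fwedge (lam / 2))
    (LF : (ℝ → ℝ) → ℝ → ENNReal)
    (hLF : ∀ F t, LF F t
      = ∫⁻ lam in Set.Ioi (0:ℝ), ENNReal.ofReal (F lam * t * Real.exp (-t * lam)))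
    (hinf : Filter.Tendsto (fun t => LF Fwedge (2 * t)) (nhdsWithin 0 (Set.Ioi 0)) (nhds ⊤)) :
    Filter.limsup (fun t => LF Fvee t / LF Fwedge t) (nhdsWithin 0 (Set.Ioi 0))
      ≤ ENNReal.ofReal C := by
  obtain rfl : LF = abelMean := funext fun F => funext (hLF F)
  set K : ℝ → ℝ≥0∞ := fun t => ENNReal.ofReal (Fvee lam₀ * t) * ENNReal.ofReal lam₀
  have hK : Tendsto K (𝓝[>] 0) (𝓝 0) := by
    have hlin : Tendsto (fun t => Fvee lam₀ * t) (𝓝[>] 0) (𝓝 0) :=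
      ((continuous_const_mul _).tendsto' 0 0 (mul_zero _)).mono_left nhdsWithin_le_nhds
    simpa using
      ENNReal.Tendsto.mul_const (ENNReal.tendsto_ofReal hlin) (Or.inr ENNReal.ofReal_ne_top)
  have hsmall : Tendsto (fun t => K t / abelMean Fwedge (2 * t)) (𝓝[>] 0) (𝓝 0) := by
    simpa using
      ENNReal.Tendsto.div hK (Or.inr ENNReal.top_ne_zero) hinf (Or.inr ENNReal.zero_ne_top)
  have hbound : ∀ᶠ t in 𝓝[>] 0, abelMean Fvee t / abelMean Fwedge t
      ≤ K t / abelMean Fwedge (2 * t) + ENNReal.ofReal C := by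
    filter_upwards [self_mem_nhdsWithin] with t (ht : 0 < t)
    have hsplit := abelMean_le_add_abelMean_of_le_on_Ici hv hlam₀.le hdom ht.le
    rw [abelMean_const_mul _ hC.le, ← abelMean_two_mul] at hsplit
    exact (ENNReal.div_le_div_right hsplit _).trans
      (ENNReal.add_mul_div_le (abelMean_two_mul_le hw ht.le))
  calc _ ≤ limsup (fun t => K t / abelMean Fwedge (2 * t) + ENNReal.ofReal C) (𝓝[>] 0) :=
        limsup_le_limsup hbound
    _ = ENNReal.ofReal C := by simpa using (hsmall.add_const _).limsup_eq

theorem stmt_6 (Fwedge Fvee : ℝ → ℝ)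
    (hw : MonotoneOn Fwedge (Set.Ici 0)) (hv : MonotoneOn Fvee (Set.Ici 0))
    (hnn : ∀ lam ≥ (0:ℝ), 0 ≤ Fwedge lam)
    (hle : ∀ lam ≥ (0:ℝ), Fwedge lam ≤ Fvee lam)
    (hne : ∃ lam ≥ (0:ℝ), Fwedge lam ≠ 0)
    (C lam₀ : ℝ) (hC : 0 < C) (hlam₀ : 0 < lam₀)
    (hdom : ∀ lam ≥ lam₀, Fvee lam ≤ C * Fwedge (lam / 2))
    (LF : (ℝ → ℝ) → ℝ → ENNReal)
    (hLF : ∀ F t, LF F t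
      = ∫⁻ lam in Set.Ioi (0:ℝ), ENNReal.ofReal (F lam * t * Real.exp (-t * lam)))
    (hinf : Filter.Tendsto (fun t => LF Fwedge (2 * t)) (nhdsWithin 0 (Set.Ioi 0)) (nhds ⊤)) :
    Filter.limsup (fun t => LF Fvee t / LF Fwedge t) (nhdsWithin 0 (Set.Ioi 0))
      ≤ ENNReal.ofReal C :=
  stmt_6_general Fwedge Fvee hw hv C lam₀ hC hlam₀ hdom LF hLF hinf
end
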